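/- Let ℓ > 0 be a real number and c ∈ (0,1]. For λ > 0 let x*(λ) denote the unique positive root of Φ_λ(x) := (ℓ+2) x^{(ℓ+4)/2} − ℓλ x^{(ℓ+2)/2} − 2λ c^{(ℓ+2)/ℓ} = 0. Then x*(λ) is a nondecreasing function of λ: for 0 < λ₁ ≤ λ₂, x*(λ₁) ≤ x*(λ₂). -/
import Mathlib


/-- `Φ_λ(x) = (ℓ+2) x^{(ℓ+4)/2} - ℓλ x^{(ℓ+2)/2} - 2λ c^{(ℓ+2)/ℓ}`, proportional to the
derivative of the one-step greedy cost in the event-triggering parameter. -/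
noncomputable def Phi (ℓ lam c x : ℝ) : ℝ :=
  (ℓ + 2) * x ^ ((ℓ + 4) / 2) - ℓ * lam * x ^ ((ℓ + 2) / 2) - 2 * lam * c ^ ((ℓ + 2) / ℓ)

/-- The unique positive root `x*(λ)` of `Φ_λ` is a nondecreasing function of `λ`:
if `0 < λ₁ ≤ λ₂` and `x₁, x₂` are positive roots of `Φ_{λ₁}, Φ_{λ₂}` respectively,
then `x₁ ≤ x₂`. -/
theorem Phi_root_monotone (ℓ c : ℝ) (hℓ : 0 < ℓ) (hc : c ∈ Set.Ioc (0 : ℝ) 1)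
    (lam₁ lam₂ x₁ x₂ : ℝ) (hlam₁ : 0 < lam₁) (hlam : lam₁ ≤ lam₂)
    (hx₁ : 0 < x₁) (hx₂ : 0 < x₂)
    (hroot₁ : Phi ℓ lam₁ c x₁ = 0) (hroot₂ : Phi ℓ lam₂ c x₂ = 0) :
    x₁ ≤ x₂ := by
  obtain ⟨hc0, hc1⟩ := hc
  set a := (ℓ + 2) / 2 with ha
  have hapos : 0 < a := by positivity
  have hae : (ℓ + 4) / 2 = a + 1 := by rw [ha]; ring
  have hx1a : 0 < x₁ ^ a := Real.rpow_pos_of_pos hx₁ a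
  have hx2a : 0 < x₂ ^ a := Real.rpow_pos_of_pos hx₂ a
  have hcp : 0 < c ^ ((ℓ + 2) / ℓ) := Real.rpow_pos_of_pos hc0 _
  have h1 : x₁ ^ ((ℓ + 4) / 2) = x₁ ^ a * x₁ := by
    rw [hae, Real.rpow_add hx₁, Real.rpow_one]
  have h2 : x₂ ^ ((ℓ + 4) / 2) = x₂ ^ a * x₂ := by
    rw [hae, Real.rpow_add hx₂, Real.rpow_one]
  -- Φ_{λ₂}(x₁) ≤ 0
  unfold Phi at hroot₁ hroot₂
  rw [h1] at hroot₁
  rw [h2] at hroot₂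
  have hP2 : (ℓ + 2) * (x₁ ^ a * x₁) - ℓ * lam₂ * x₁ ^ a - 2 * lam₂ * c ^ ((ℓ + 2) / ℓ) ≤ 0 := by
    nlinarith [mul_nonneg (sub_nonneg.mpr hlam) hx1a.le,
      mul_nonneg (sub_nonneg.mpr hlam) hcp.le]
  by_contra hcon
  push_neg at hcon
  have hpow : x₂ ^ a < x₁ ^ a := Real.rpow_lt_rpow hx₂.le hcon hapos
  have hlam₂ : 0 < lam₂ := lt_of_lt_of_le hlam₁ hlam
  -- From root₂: ((ℓ+2)x₂ - ℓλ₂) x₂^a = K > 0, so (ℓ+2)x₂ - ℓλ₂ > 0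
  have hA : 0 < (ℓ + 2) * x₂ - ℓ * lam₂ := by
    have hK : 0 < 2 * lam₂ * c ^ ((ℓ + 2) / ℓ) := by positivity
    nlinarith
  nlinarith [mul_pos hA hx2a, mul_pos (mul_pos (by linarith : (0:ℝ) < ℓ + 2) (sub_pos.mpr hcon)) hx1a,
    mul_lt_mul_of_pos_left hpow hA]
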